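/- Let \alpha > -1 and -2 < \beta < -1, and let n \geq 3. Suppose x_{1,n} < -1 is the smallest zero of P_n^{(\alpha,\beta)}, that P_{n-1}^{(\alpha,\beta)}(x_{1,n}) \neq 0, and that P_{n-2}^{(\alpha,\beta+2)}(x_{1,n}) / P_{n-1}^{(\alpha,\beta)}(x_{1,n}) > 0. Then x_{1,n} > -1 + 2(\beta+1)/(2n+\alpha+\beta). -/

import Mathlib

open Finset

/-- Generalized binomial coefficient `(a choose k)` for real `a`. -/
noncomputable def genBinom (a : ℝ) (k : ℕ) : ℝ :=
  (∏ i ∈ Finset.range k, (a - i)) / (Nat.factorial k)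

/-- Jacobi polynomial `P_n^{(α,β)}(x)` via the explicit formula. -/
noncomputable def jacobiP (n : ℕ) (α β x : ℝ) : ℝ :=
  ∑ k ∈ Finset.range (n + 1),
    genBinom ((n : ℝ) + α) (n - k) * genBinom ((n : ℝ) + β) k *
      ((x - 1) / 2) ^ k * ((x + 1) / 2) ^ (n - k)

lemma gb_zero (a : ℝ) : genBinom a 0 = 1 := by simp [genBinom]

lemma gb_one (a : ℝ) : genBinom a 1 = a := by simp [genBinom]

lemma gb_succ (a : ℝ) (k : ℕ) :
    genBinom a (k + 1) = genBinom a k * (a - k) / ((k : ℝ) + 1) := by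
  unfold genBinom
  rw [Finset.prod_range_succ, Nat.factorial_succ, div_mul_eq_mul_div, div_div]
  congr 1
  push_cast
  ring

lemma gb_shift (a : ℝ) (k : ℕ) :
    genBinom (a + 1) (k + 1) = genBinom a k * (a + 1) / ((k : ℝ) + 1) := by
  unfold genBinom
  rw [Finset.prod_range_succ', Nat.factorial_succ]
  have h0 : ∏ i ∈ Finset.range k, (a + 1 - ((i + 1 : ℕ) : ℝ)) = ∏ i ∈ Finset.range k, (a - i) :=
    Finset.prod_congr rfl (fun i _ => by push_cast; ring)
  rw [h0, div_mul_eq_mul_div, div_div]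
  rw [mul_comm (∏ i ∈ Finset.range k, (a - ↑i)) (a+1)]
  congr 1 <;> (push_cast; ring)

noncomputable def akD (m : ℕ) (α β : ℝ) (k : ℕ) : ℝ :=
  genBinom ((m : ℝ) + 2 + α) (m + 2 - k) * genBinom ((m : ℝ) + 2 + β) k

noncomputable def bkD (m : ℕ) (α β : ℝ) (k : ℕ) : ℝ :=
  genBinom ((m : ℝ) + 1 + α) (m + 1 - k) * genBinom ((m : ℝ) + 1 + (β + 2)) k

noncomputable def dkD (m : ℕ) (α β : ℝ) (k : ℕ) : ℝ :=
  genBinom ((m : ℝ) + 3 + α) (m + 3 - k) * genBinom ((m : ℝ) + 3 + β) k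

set_option maxHeartbeats 1600000 in
lemma coeffL (m : ℕ) (α β : ℝ) (hab : 2 * ((m : ℝ) + 3) + α + β ≠ 0)
    (k : ℕ) (hk : k < m + 4) :
    (β + ((m:ℝ)+3)) / (2*((m:ℝ)+3)) * (2 - 2*(β+1)/(2*((m:ℝ)+3)+α+β)) *
        (if k < m + 3 then akD m α β k else 0)
      + (β + ((m:ℝ)+3)) / (2*((m:ℝ)+3)) * (2*(β+1)/(2*((m:ℝ)+3)+α+β)) *
        (if k = 0 then 0 else akD m α β (k - 1))
    = (α + ((m:ℝ)+3) - 1) / ((m:ℝ)+3) * (if k < m + 2 then bkD m α β k else 0)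
      + (β+1) / (α+β+2*((m:ℝ)+3)) * dkD m α β k := by
  have h2 : ((m:ℝ)+2) ≠ 0 := by positivity
  have h3 : ((m:ℝ)+3) ≠ 0 := by positivity
  have hab2 : α + β + 2*((m:ℝ)+3) ≠ 0 := fun h => hab (by linarith)
  by_cases hk0 : k = 0
  · subst hk0
    rw [if_pos (by omega : 0 < m + 3), if_pos rfl, if_pos (by omega : 0 < m + 2)]
    unfold akD bkD dkD
    simp only [Nat.sub_zero, gb_zero, mul_one]
    set q1 : ℝ := genBinom ((m:ℝ)+1+α) (m+1) / (((m:ℝ)+2)*((m:ℝ)+3)) with hq1d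
    have hq1 : genBinom ((m:ℝ)+1+α) (m+1) = q1 * (((m:ℝ)+2)*((m:ℝ)+3)) := by
      rw [hq1d]; field_simp
    have hA : genBinom ((m:ℝ)+2+α) (m+2) = q1 * ((m:ℝ)+3) * ((m:ℝ)+2+α) := by
      have e := gb_shift ((m:ℝ)+1+α) (m+1)
      push_cast at e
      rw [show (m:ℝ)+1+α+1 = (m:ℝ)+2+α by ring, show (m:ℝ)+1+1 = (m:ℝ)+2 by ring] at e
      rw [e, hq1]; field_simp
    have hD : genBinom ((m:ℝ)+3+α) (m+3) = q1 * ((m:ℝ)+2+α) * ((m:ℝ)+3+α) := by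
      have e := gb_shift ((m:ℝ)+2+α) (m+2)
      push_cast at e
      rw [show (m:ℝ)+2+α+1 = (m:ℝ)+3+α by ring, show (m:ℝ)+2+1 = (m:ℝ)+3 by ring] at e
      rw [e, hA]; field_simp
    rw [hD, hA, hq1]
    clear_value q1
    rw [show α+β+2*((m:ℝ)+3) = 2*((m:ℝ)+3)+α+β by ring]
    generalize hD : 2*((m:ℝ)+3)+α+β = D at hab ⊢
    field_simp
    rw [← hD]
    ring
  · by_cases hk3 : k = m + 3
    · subst hk3
      rw [if_neg (by omega), if_neg hk0, if_neg (by omega)]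
      unfold akD dkD
      have e1 : m + 3 - 1 = m + 2 := rfl
      rw [e1]
      simp only [Nat.sub_self, gb_zero, one_mul]
      set q2 : ℝ := genBinom ((m:ℝ)+2+β) (m+2) / ((m:ℝ)+3) with hq2d
      have hq2 : genBinom ((m:ℝ)+2+β) (m+2) = q2 * ((m:ℝ)+3) := by rw [hq2d]; field_simp
      have hB : genBinom ((m:ℝ)+3+β) (m+3) = q2 * ((m:ℝ)+3+β) := by
        have e := gb_shift ((m:ℝ)+2+β) (m+2)
        push_cast at e
        rw [show (m:ℝ)+2+β+1 = (m:ℝ)+3+β by ring, show (m:ℝ)+2+1 = (m:ℝ)+3 by ring] at e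
        rw [e, hq2]; field_simp
      rw [hB, hq2]
      clear_value q2
      rw [show α+β+2*((m:ℝ)+3) = 2*((m:ℝ)+3)+α+β by ring]
      generalize hD : 2*((m:ℝ)+3)+α+β = D at hab ⊢
      field_simp
      rw [← hD]
      ring
    · by_cases hk2 : k = m + 2
      · subst hk2
        rw [if_pos (by omega), if_neg hk0, if_neg (by omega)]
        unfold akD dkD
        have e1 : m + 2 - 1 = m + 1 := rfl
        rw [e1, show m + 2 - (m + 2) = 0 by omega, gb_zero,
          show m + 2 - (m + 1) = 1 by omega, gb_one,
          show m + 3 - (m + 2) = 1 by omega, gb_one]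
        set q2 : ℝ := genBinom ((m:ℝ)+2+β) (m+1) / ((m:ℝ)+2) with hq2d
        have hq2 : genBinom ((m:ℝ)+2+β) (m+1) = q2 * ((m:ℝ)+2) := by rw [hq2d]; field_simp
        have hB2 : genBinom ((m:ℝ)+2+β) (m+2) = q2 * (β+1) := by
          have e := gb_succ ((m:ℝ)+2+β) (m+1)
          push_cast at e
          rw [show (m:ℝ)+2+β-((m:ℝ)+1) = β+1 by ring, show (m:ℝ)+1+1 = (m:ℝ)+2 by ring] at e
          rw [e, hq2]; field_simp
        have hB3 : genBinom ((m:ℝ)+3+β) (m+2) = q2 * ((m:ℝ)+3+β) := by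
          have e := gb_shift ((m:ℝ)+2+β) (m+1)
          push_cast at e
          rw [show (m:ℝ)+2+β+1 = (m:ℝ)+3+β by ring, show (m:ℝ)+1+1 = (m:ℝ)+2 by ring] at e
          rw [e, hq2]; field_simp
        rw [hB2, hB3, hq2]
        clear_value q2
        rw [show α+β+2*((m:ℝ)+3) = 2*((m:ℝ)+3)+α+β by ring]
        generalize hD : 2*((m:ℝ)+3)+α+β = D at hab ⊢
        field_simp
        rw [← hD]
        ring
      · -- generic case : k = j+1 with j + t = m
        obtain ⟨j, rfl⟩ : ∃ j, k = j + 1 := ⟨k - 1, by omega⟩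
        obtain ⟨t, rfl⟩ : ∃ t, m = j + t := ⟨m - j, by omega⟩
        rw [if_pos (by omega), if_neg (by omega), if_pos (by omega)]
        unfold akD bkD dkD
        rw [show j + 1 - 1 = j by omega,
          show j + t + 2 - (j + 1) = t + 1 by omega,
          show j + t + 2 - j = t + 2 by omega,
          show j + t + 1 - (j + 1) = t by omega,
          show j + t + 3 - (j + 1) = t + 2 by omega]
        have ht1 : ((t:ℝ)+1) ≠ 0 := by positivity
        have ht2 : ((t:ℝ)+2) ≠ 0 := by positivity
        have hj1 : ((j:ℝ)+1) ≠ 0 := by positivity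
        push_cast at hab hab2 ⊢
        have h3' : ((j:ℝ)+(t:ℝ)+3) ≠ 0 := by positivity
        set q1 : ℝ := genBinom ((j:ℝ)+(t:ℝ)+1+α) t / (((t:ℝ)+1)*((t:ℝ)+2)) with hq1d
        set q2 : ℝ := genBinom ((j:ℝ)+(t:ℝ)+2+β) j / ((j:ℝ)+1) with hq2d
        have hq1 : genBinom ((j:ℝ)+(t:ℝ)+1+α) t = q1 * (((t:ℝ)+1)*((t:ℝ)+2)) := by
          rw [hq1d]; field_simp
        have hq2 : genBinom ((j:ℝ)+(t:ℝ)+2+β) j = q2 * ((j:ℝ)+1) := by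
          rw [hq2d]; field_simp
        have hA1 : genBinom ((j:ℝ)+(t:ℝ)+2+α) (t+1)
            = q1 * ((t:ℝ)+2) * ((j:ℝ)+(t:ℝ)+2+α) := by
          have e := gb_shift ((j:ℝ)+(t:ℝ)+1+α) t
          rw [show (j:ℝ)+(t:ℝ)+1+α+1 = (j:ℝ)+(t:ℝ)+2+α by ring] at e
          rw [e, hq1]; field_simp
        have hA2 : genBinom ((j:ℝ)+(t:ℝ)+2+α) (t+2)
            = q1 * ((j:ℝ)+(t:ℝ)+2+α) * ((j:ℝ)+(t:ℝ)+2+α-((t:ℝ)+1)) := by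
          have e := gb_succ ((j:ℝ)+(t:ℝ)+2+α) (t+1)
          push_cast at e
          rw [show (t:ℝ)+1+1 = (t:ℝ)+2 by ring] at e
          rw [e, hA1]; field_simp
        have hA3 : genBinom ((j:ℝ)+(t:ℝ)+3+α) (t+2)
            = q1 * ((j:ℝ)+(t:ℝ)+2+α) * ((j:ℝ)+(t:ℝ)+3+α) := by
          have e := gb_shift ((j:ℝ)+(t:ℝ)+2+α) (t+1)
          push_cast at e
          rw [show (j:ℝ)+(t:ℝ)+2+α+1 = (j:ℝ)+(t:ℝ)+3+α by ring,
            show (t:ℝ)+1+1 = (t:ℝ)+2 by ring] at e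
          rw [e, hA1]; field_simp
        have hB1 : genBinom ((j:ℝ)+(t:ℝ)+2+β) (j+1)
            = q2 * ((j:ℝ)+(t:ℝ)+2+β-(j:ℝ)) := by
          have e := gb_succ ((j:ℝ)+(t:ℝ)+2+β) j
          rw [e, hq2]; field_simp
        have hB2 : genBinom ((j:ℝ)+(t:ℝ)+3+β) (j+1)
            = q2 * ((j:ℝ)+(t:ℝ)+3+β) := by
          have e := gb_shift ((j:ℝ)+(t:ℝ)+2+β) j
          rw [show (j:ℝ)+(t:ℝ)+2+β+1 = (j:ℝ)+(t:ℝ)+3+β by ring] at e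
          rw [e, hq2]; field_simp
        have hB3 : genBinom ((j:ℝ)+(t:ℝ)+1+(β+2)) (j+1)
            = q2 * ((j:ℝ)+(t:ℝ)+3+β) := by
          rw [show (j:ℝ)+(t:ℝ)+1+(β+2) = (j:ℝ)+(t:ℝ)+2+β+1 by ring]
          have e := gb_shift ((j:ℝ)+(t:ℝ)+2+β) j
          rw [e, hq2]; field_simp; ring
        rw [hA2, hA3, hA1, hB1, hB2, hB3, hq1, hq2]
        clear_value q1 q2
        clear hA1 hA2 hA3 hB1 hB2 hB3 hq1 hq2 hq1d hq2d hk hk0 hk3 hk2 h2 h3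
        rw [show α+β+2*((j:ℝ)+(t:ℝ)+3) = 2*((j:ℝ)+(t:ℝ)+3)+α+β by ring]
        generalize hD : 2*((j:ℝ)+(t:ℝ)+3)+α+β = D at hab ⊢
        field_simp
        rw [← hD]
        ring

set_option maxHeartbeats 1000000 in
lemma jacobi_key (m : ℕ) (α β x : ℝ) (hab : 2 * ((m : ℝ) + 3) + α + β ≠ 0) :
    (β + ((m:ℝ)+3)) / (2*((m:ℝ)+3)) * (x + 1 - 2*(β+1)/(2*((m:ℝ)+3)+α+β)) *
        jacobiP (m+2) α β x
    = ((x+1)/2)^2 * ((α + ((m:ℝ)+3) - 1) / ((m:ℝ)+3)) * jacobiP (m+1) α (β+2) x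
      + (β+1) / (α+β+2*((m:ℝ)+3)) * jacobiP (m+3) α β x := by
  set u : ℝ := (x - 1) / 2 with hu
  set v : ℝ := (x + 1) / 2 with hv
  have hx1 : x + 1 - 2*(β+1)/(2*((m:ℝ)+3)+α+β)
      = (2 - 2*(β+1)/(2*((m:ℝ)+3)+α+β)) * v + (2*(β+1)/(2*((m:ℝ)+3)+α+β)) * u := by
    rw [hu, hv]; ring
  have E1 : v * jacobiP (m+2) α β x
      = ∑ k ∈ Finset.range (m+4), (if k < m + 3 then akD m α β k else 0) * (u^k * v^(m+3-k)) := by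
    rw [Finset.sum_range_succ, if_neg (by omega : ¬ m + 3 < m + 3), zero_mul, add_zero]
    rw [jacobiP, Finset.mul_sum]
    rw [show m + 2 + 1 = m + 3 from rfl]
    refine Finset.sum_congr rfl fun k hk => ?_
    have hk' : k < m + 3 := Finset.mem_range.mp hk
    rw [if_pos hk']
    rw [← hu, ← hv]
    unfold akD
    have h1 : m + 3 - k = (m + 2 - k) + 1 := by omega
    have h2 : ((m+2:ℕ):ℝ) = (m:ℝ) + 2 := by push_cast; ring
    rw [h1, pow_succ, h2]
    ring
  have E2 : u * jacobiP (m+2) α β x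
      = ∑ k ∈ Finset.range (m+4), (if k = 0 then 0 else akD m α β (k-1)) * (u^k * v^(m+3-k)) := by
    rw [Finset.sum_range_succ'
      (fun k => (if k = 0 then 0 else akD m α β (k-1)) * (u^k * v^(m+3-k))) (m+3)]
    simp only [eq_self_iff_true, if_true, Nat.succ_ne_zero, if_false, Nat.succ_sub_one,
      zero_mul, add_zero]
    rw [jacobiP, Finset.mul_sum]
    rw [show m + 2 + 1 = m + 3 from rfl]
    refine Finset.sum_congr rfl fun k hk => ?_
    have hk' : k < m + 3 := Finset.mem_range.mp hk
    rw [← hu, ← hv]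
    unfold akD
    have h1 : m + 3 - (k + 1) = m + 2 - k := by omega
    have h2 : ((m+2:ℕ):ℝ) = (m:ℝ) + 2 := by push_cast; ring
    rw [h1, pow_succ, h2]
    ring
  have E3 : v^2 * jacobiP (m+1) α (β+2) x
      = ∑ k ∈ Finset.range (m+4), (if k < m + 2 then bkD m α β k else 0) * (u^k * v^(m+3-k)) := by
    rw [Finset.sum_range_succ, if_neg (by omega : ¬ m + 3 < m + 2), zero_mul, add_zero]
    rw [Finset.sum_range_succ, if_neg (by omega : ¬ m + 2 < m + 2), zero_mul, add_zero]
    rw [jacobiP, Finset.mul_sum]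
    rw [show m + 1 + 1 = m + 2 from rfl]
    refine Finset.sum_congr rfl fun k hk => ?_
    have hk' : k < m + 2 := Finset.mem_range.mp hk
    rw [if_pos hk']
    rw [← hu, ← hv]
    unfold bkD
    have h1 : m + 3 - k = (m + 1 - k) + 2 := by omega
    have h2 : ((m+1:ℕ):ℝ) = (m:ℝ) + 1 := by push_cast; ring
    rw [h1, pow_add, h2]
    ring
  have E4 : jacobiP (m+3) α β x
      = ∑ k ∈ Finset.range (m+4), dkD m α β k * (u^k * v^(m+3-k)) := by
    rw [jacobiP]
    rw [show m + 3 + 1 = m + 4 from rfl]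
    refine Finset.sum_congr rfl fun k hk => ?_
    rw [← hu, ← hv]
    unfold dkD
    have h2 : ((m+3:ℕ):ℝ) = (m:ℝ) + 3 := by push_cast; ring
    rw [h2]
    ring
  calc (β + ((m:ℝ)+3)) / (2*((m:ℝ)+3)) * (x + 1 - 2*(β+1)/(2*((m:ℝ)+3)+α+β)) *
        jacobiP (m+2) α β x
      = (β + ((m:ℝ)+3)) / (2*((m:ℝ)+3)) * (2 - 2*(β+1)/(2*((m:ℝ)+3)+α+β)) *
          (v * jacobiP (m+2) α β x)
        + (β + ((m:ℝ)+3)) / (2*((m:ℝ)+3)) * (2*(β+1)/(2*((m:ℝ)+3)+α+β)) *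
          (u * jacobiP (m+2) α β x) := by rw [hx1]; ring
    _ = ∑ k ∈ Finset.range (m+4),
          ((β + ((m:ℝ)+3)) / (2*((m:ℝ)+3)) * (2 - 2*(β+1)/(2*((m:ℝ)+3)+α+β)) *
            (if k < m + 3 then akD m α β k else 0)
          + (β + ((m:ℝ)+3)) / (2*((m:ℝ)+3)) * (2*(β+1)/(2*((m:ℝ)+3)+α+β)) *
            (if k = 0 then 0 else akD m α β (k-1))) * (u^k * v^(m+3-k)) := by
        rw [E1, E2, Finset.mul_sum, Finset.mul_sum, ← Finset.sum_add_distrib]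
        exact Finset.sum_congr rfl fun k _ => by ring
    _ = ∑ k ∈ Finset.range (m+4),
          ((α + ((m:ℝ)+3) - 1) / ((m:ℝ)+3) * (if k < m + 2 then bkD m α β k else 0)
          + (β+1) / (α+β+2*((m:ℝ)+3)) * dkD m α β k) * (u^k * v^(m+3-k)) :=
        Finset.sum_congr rfl fun k hk => by
          rw [coeffL m α β hab k (Finset.mem_range.mp hk)]
    _ = (α + ((m:ℝ)+3) - 1) / ((m:ℝ)+3) * (v^2 * jacobiP (m+1) α (β+2) x)
        + (β+1) / (α+β+2*((m:ℝ)+3)) * jacobiP (m+3) α β x := by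
        rw [E3, E4, Finset.mul_sum, Finset.mul_sum, ← Finset.sum_add_distrib]
        exact Finset.sum_congr rfl fun k _ => by ring
    _ = ((x+1)/2)^2 * ((α + ((m:ℝ)+3) - 1) / ((m:ℝ)+3)) * jacobiP (m+1) α (β+2) x
        + (β+1) / (α+β+2*((m:ℝ)+3)) * jacobiP (m+3) α β x := by
        rw [hv]; ring

theorem smallest_zero_lower_bound (n : ℕ) (hn : 3 ≤ n) (α β : ℝ)
    (hα : -1 < α) (hβ1 : -2 < β) (hβ2 : β < -1) (x : ℝ)
    (hx : x < -1) (hroot : jacobiP n α β x = 0)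
    (hleast : ∀ y : ℝ, jacobiP n α β y = 0 → x ≤ y)
    (hne : jacobiP (n - 1) α β x ≠ 0)
    (hpos : jacobiP (n - 2) α (β + 2) x / jacobiP (n - 1) α β x > 0) :
    x > -1 + 2 * (β + 1) / (2 * (n : ℝ) + α + β) := by
  obtain ⟨m, rfl⟩ : ∃ m, n = m + 3 := ⟨n - 3, by omega⟩
  have hm0 : (0:ℝ) ≤ (m:ℝ) := Nat.cast_nonneg m
  have habp : (0:ℝ) < 2 * ((m:ℝ) + 3) + α + β := by linarith
  have hab : 2 * ((m:ℝ) + 3) + α + β ≠ 0 := ne_of_gt habp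
  rw [show m + 3 - 1 = m + 2 from rfl] at hne
  rw [show m + 3 - 2 = m + 1 from rfl, show m + 3 - 1 = m + 2 from rfl] at hpos
  have key := jacobi_key m α β x hab
  rw [hroot, mul_zero, add_zero] at key
  set P1 := jacobiP (m+2) α β x with hP1
  set P2 := jacobiP (m+1) α (β+2) x with hP2
  have hK : 0 < ((x+1)/2)^2 * ((α + ((m:ℝ)+3) - 1) / ((m:ℝ)+3)) := by
    apply mul_pos
    · have h1 : (x+1)/2 ≠ 0 := by
        intro h
        have : x + 1 = 0 := by linarith [(div_eq_zero_iff.mp h).resolve_right (by norm_num)]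
        linarith
      exact pow_two_pos_of_ne_zero h1
    · exact div_pos (by linarith) (by linarith)
  have hc1 : 0 < (β + ((m:ℝ)+3)) / (2*((m:ℝ)+3)) := div_pos (by linarith) (by linarith)
  have hA : 0 < x + 1 - 2*(β+1)/(2*((m:ℝ)+3)+α+β) := by
    by_contra hcon
    push_neg at hcon
    rcases div_pos_iff.mp hpos with ⟨h2p, h1p⟩ | ⟨h2n, h1n⟩
    · nlinarith [key, mul_pos hK h2p, mul_pos hc1 h1p]
    · nlinarith [key, mul_neg_of_pos_of_neg hK h2n, mul_neg_of_pos_of_neg hc1 h1n]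
  have hgoal : x > -1 + 2 * (β + 1) / (2 * ((m:ℝ) + 3) + α + β) := by linarith
  push_cast
  exact hgoal
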